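/- Let G be a connected graph and P, P' distinguishable regular bounded profiles in G. Then the separations (A,B) that distinguish P and P' efficiently have only finitely many distinct separators A ∩ B. -/

import Mathlib

/-!
Suppose infinitely many separators occur. All of them have the order `m` of an efficient
distinguisher, so a largest set `Y` contained in infinitely many of them is a core: there are
separators `Xᵢ ⊋ Y` of efficient distinguishers `sᵢ ∈ P`, `sᵢ⁻¹ ∈ P'` such that every vertex
outside `Y` lies in only finitely many `Xᵢ`. Pick `zᵢ ∈ Xᵢ ∖ Y`. Orienting every finite-order
separation towards a free ultrafilter on the `zᵢ` gives an `ℵ₀`-profile, so the bounded profiles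
`P` and `P'` contain separations `c` and `c'` with `zᵢ ∉ c.B` and `zᵢ ∉ c'.B` for
ultrafilter-many `i`.

For such an `i`, uncrossing `sᵢ` with `c`, and with separations of order `|Y| < m` (on which `P`
and `P'` agree), shows that `Xᵢ ∖ Y` lies in the components of `G - Y` that meet the separator of
`c` outside `sᵢ.A`; symmetrically it lies in those meeting the separator of `c'` outside `sᵢ.B`.
So some component of `G - Y` contains vertices of these separators on opposite strict sides of
`sᵢ`, and every walk between them avoiding `Y` meets `Xᵢ ∖ Y`. But `i` can be chosen so that
`Xᵢ ∖ Y` misses a walk fixed in advance for each of the finitely many pairs of such vertices that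
`G - Y` connects.
-/

/-- A separation of a graph `G`: a pair of vertex sets covering `V` with no edge
between `A ∖ B` and `B ∖ A`. -/
structure GraphSep {V : Type} (G : SimpleGraph V) where
  A : Set V
  B : Set V
  union_eq : A ∪ B = Set.univ
  no_edge : ∀ a ∈ A \ B, ∀ b ∈ B \ A, ¬ G.Adj a b

namespace GraphSep

variable {V V' : Type} {G : SimpleGraph V} {G' : SimpleGraph V'}

/-- The inverse `(B,A)` of a separation `(A,B)`. -/
def inv (s : GraphSep G) : GraphSep G where
  A := s.B
  B := s.A
  union_eq := by rw [Set.union_comm]; exact s.union_eq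
  no_edge := fun a ha b hb h => s.no_edge b hb a ha h.symm

/-- The separator `A ∩ B`. -/
def sepSet (s : GraphSep G) : Set V := s.A ∩ s.B

/-- The order `|A ∩ B|` of a separation, as an extended natural number. -/
noncomputable def order (s : GraphSep G) : ℕ∞ := (s.A ∩ s.B).encard

/-- `(A,B) ≤ (C,D)` iff `A ⊆ C` and `D ⊆ B`. -/
protected def le (s t : GraphSep G) : Prop := s.A ⊆ t.A ∧ t.B ⊆ s.B

/-- Two separations are nested if after possibly replacing either by its inverse
they are `≤`-comparable. -/
def Nested (s t : GraphSep G) : Prop :=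
  s.le t ∨ s.le t.inv ∨ s.inv.le t ∨ s.inv.le t.inv

lemma mem_A_or_B (s : GraphSep G) (x : V) : x ∈ s.A ∨ x ∈ s.B := by
  have h : x ∈ s.A ∪ s.B := by rw [s.union_eq]; exact Set.mem_univ x
  exact (Set.mem_union _ _ _).1 h

/-- The join `(A,B) ∨ (C,D) = (A ∪ C, B ∩ D)`. -/
def join (s t : GraphSep G) : GraphSep G where
  A := s.A ∪ t.A
  B := s.B ∩ t.B
  union_eq := by
    apply Set.eq_univ_of_forall
    intro x
    rcases s.mem_A_or_B x with h1 | h1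
    · exact Or.inl (Or.inl h1)
    · rcases t.mem_A_or_B x with h2 | h2
      · exact Or.inl (Or.inr h2)
      · exact Or.inr ⟨h1, h2⟩
  no_edge := by
    rintro a ⟨haA, haB⟩ b ⟨hbB, hbA⟩ hadj
    by_cases hsB : a ∈ s.B
    · have hatB : a ∉ t.B := fun h => haB ⟨hsB, h⟩
      have hatA : a ∈ t.A := (t.mem_A_or_B a).resolve_right hatB
      exact t.no_edge a ⟨hatA, hatB⟩ b ⟨hbB.2, fun h => hbA (Or.inr h)⟩ hadj
    · have hasA : a ∈ s.A := (s.mem_A_or_B a).resolve_right hsB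
      exact s.no_edge a ⟨hasA, hsB⟩ b ⟨hbB.1, fun h => hbA (Or.inl h)⟩ hadj

/-- The image of a separation under a graph isomorphism. -/
def map (φ : G ≃g G') (s : GraphSep G) : GraphSep G' where
  A := ⇑φ '' s.A
  B := ⇑φ '' s.B
  union_eq := by
    apply Set.eq_univ_of_forall
    intro y
    rcases s.mem_A_or_B (φ.symm y) with h | h
    · exact Or.inl ⟨φ.symm y, h, φ.apply_symm_apply y⟩
    · exact Or.inr ⟨φ.symm y, h, φ.apply_symm_apply y⟩
  no_edge := by
    rintro a ⟨⟨x, hxA, rfl⟩, haB⟩ b ⟨⟨y, hyB, rfl⟩, hbA⟩ hadj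
    exact s.no_edge x ⟨hxA, fun h => haB ⟨x, h, rfl⟩⟩ y ⟨hyB, fun h => hbA ⟨y, h, rfl⟩⟩
      (φ.map_adj_iff.mp hadj)

/-- The neighbourhood of a set of vertices. -/
def nbhd (G : SimpleGraph V) (X : Set V) : Set V := {v | v ∉ X ∧ ∃ x ∈ X, G.Adj v x}

/-- `w` can be reached from `v` by a walk avoiding `X`. -/
def AvoidReach (G : SimpleGraph V) (X : Set V) (v w : V) : Prop :=
  ∃ p : G.Walk v w, ∀ u ∈ p.support, u ∉ X

/-- `C` is a (connected) component of `G − X`. -/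
def IsCompOf (G : SimpleGraph V) (X C : Set V) : Prop :=
  ∃ v, v ∉ X ∧ C = {w | AvoidReach G X v w}

/-- A separation `(A,B)` is tight if each of `A ∖ B` and `B ∖ A` contains a component
of `G − (A ∩ B)` whose neighbourhood is all of `A ∩ B`. -/
def IsTight (s : GraphSep G) : Prop :=
  (∃ C, IsCompOf G s.sepSet C ∧ nbhd G C = s.sepSet ∧ C ⊆ s.A \ s.B) ∧
  (∃ C, IsCompOf G s.sepSet C ∧ nbhd G C = s.sepSet ∧ C ⊆ s.B \ s.A)

/-- An orientation of `S_k`: it contains only separations of order `< k`, contains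
at least one of `s, s⁻¹` for every separation of order `< k`, and contains both only
if they coincide. -/
def IsOrientation (k : ℕ∞) (P : Set (GraphSep G)) : Prop :=
  (∀ s ∈ P, s.order < k) ∧
  (∀ s : GraphSep G, s.order < k → (s ∈ P ∨ s.inv ∈ P)) ∧
  (∀ s ∈ P, s.inv ∈ P → s.inv = s)

/-- Consistency: no two members `r, s` with distinct underlying separations satisfy
`r⁻¹ ≤ s`. -/
def Consistent (P : Set (GraphSep G)) : Prop :=
  ∀ r ∈ P, ∀ s ∈ P, r.inv.le s → r = s ∨ r = s.inv

/-- A `k`-profile: a consistent orientation of `S_k` satisfying the profile property. -/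
def IsProfile (k : ℕ∞) (P : Set (GraphSep G)) : Prop :=
  IsOrientation k P ∧ Consistent P ∧ ∀ s ∈ P, ∀ t ∈ P, (s.join t).inv ∉ P

/-- A profile in `G` is a `k`-profile for some `k ∈ ℕ ∪ {ℵ₀}`. -/
def IsProfileIn (G : SimpleGraph V) (P : Set (GraphSep G)) : Prop := ∃ k : ℕ∞, IsProfile k P

/-- A profile is regular if it contains no separation of the form `(V, X)`. -/
def RegularP (P : Set (GraphSep G)) : Prop := ∀ s ∈ P, s.A ≠ Set.univ

/-- A profile is bounded if it is a `k`-profile for some finite `k` and is not a subset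
of any `ℵ₀`-profile. -/
def BoundedP (P : Set (GraphSep G)) : Prop :=
  (∃ k : ℕ, IsProfile (k : ℕ∞) P) ∧ ∀ Q : Set (GraphSep G), IsProfile ⊤ Q → ¬ P ⊆ Q

/-- `s` distinguishes the profiles `P` and `P'`. -/
def Distinguishes (s : GraphSep G) (P P' : Set (GraphSep G)) : Prop :=
  (s ∈ P ∧ s.inv ∈ P') ∨ (s.inv ∈ P ∧ s ∈ P')

/-- `s` distinguishes `P` and `P'` efficiently: it has minimum order among all
separations distinguishing `P` and `P'`. -/
def EffDist (s : GraphSep G) (P P' : Set (GraphSep G)) : Prop :=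
  Distinguishes s P P' ∧ ∀ t : GraphSep G, Distinguishes t P P' → s.order ≤ t.order

/-- `P` and `P'` are distinguishable: some finite-order separation distinguishes them. -/
def Distinguishable (P P' : Set (GraphSep G)) : Prop :=
  ∃ s : GraphSep G, s.order < ⊤ ∧ Distinguishes s P P'

/-- Robustness of a profile. -/
def RobustP (P : Set (GraphSep G)) : Prop :=
  ∀ s ∈ P, ∀ t : GraphSep G, t.order < ⊤ →
    (s.join t).order < s.order → (s.join t.inv).order < s.order →
    (s.join t ∈ P ∨ s.join t.inv ∈ P)

/-- A `k`-profile is principal if for every vertex set `X` with `|X| < k` it contains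
`(V ∖ C, C ∪ X)` for some component `C` of `G − X`. -/
def PrincipalP (k : ℕ∞) (P : Set (GraphSep G)) : Prop :=
  ∀ X : Set V, X.encard < k →
    ∃ C, IsCompOf G X C ∧ ∃ s ∈ P, s.A = Cᶜ ∧ s.B = C ∪ X

/-- `c` is a corner separation of `s` and `t`. -/
def IsCornerSep (s t c : GraphSep G) : Prop :=
  ∃ s' ∈ ({s, s.inv} : Set (GraphSep G)), ∃ t' ∈ ({t, t.inv} : Set (GraphSep G)),
    c = s'.join t' ∨ c = (s'.join t').inv

/-- The set `S ⊆ V ∖ {x,y}` separates `x` from `y` in `G`. -/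
def SeparatesIn (G : SimpleGraph V) (x y : V) (S : Set V) : Prop :=
  x ∉ S ∧ y ∉ S ∧ ∀ p : G.Walk x y, ∃ u ∈ p.support, u ∈ S

/-- `S` is a `⊆`-minimal `x`–`y`-separator in `G`. -/
def MinSeparator (G : SimpleGraph V) (x y : V) (S : Set V) : Prop :=
  SeparatesIn G x y S ∧ ∀ S' ⊆ S, SeparatesIn G x y S' → S' = S

/-- The separation of `G` induced by an (oriented) edge of a tree-decomposition. -/
def InducedSep {ι : Type} (T : SimpleGraph ι) (𝒱 : ι → Set V) (x : GraphSep G) : Prop :=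
  ∃ t t' : ι, T.Adj t t' ∧
    x.A = (⋃ u ∈ {u : ι | ∃ p : T.Walk u t, Sym2.mk t t' ∉ p.edges}, 𝒱 u) ∧
    x.B = (⋃ u ∈ {u : ι | ∃ p : T.Walk u t', Sym2.mk t t' ∉ p.edges}, 𝒱 u)

/-- Opposite pairs of corner separations of `s` and `t`. -/
def OppPair (s t c d : GraphSep G) : Prop :=
  (c = s.join t ∧ d = s.inv.join t.inv) ∨ (c = s.inv.join t.inv ∧ d = s.join t) ∨
  (c = s.join t.inv ∧ d = s.inv.join t) ∨ (c = s.inv.join t ∧ d = s.join t.inv)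

end GraphSep

namespace Set.Infinite

variable {α : Type*} {𝒜 : Set (Set α)} {n : ℕ}

lemma exists_maximal_core (h𝒜 : 𝒜.Infinite) (hn : ∀ X ∈ 𝒜, X.encard ≤ n) :
    ∃ Y : Set α, {X ∈ 𝒜 | Y ⊆ X}.Infinite ∧ ∀ v ∉ Y, {X ∈ 𝒜 | insert v Y ⊆ X}.Finite := by
  classical
  let Q : ℕ → Prop := fun j => ∃ Y : Set α, Y.encard = j ∧ {X ∈ 𝒜 | Y ⊆ X}.Infinite
  obtain ⟨Y, hYj, hY⟩ : Q (Nat.findGreatest Q n) :=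
    Nat.findGreatest_spec (Nat.zero_le n) ⟨∅, Set.encard_empty, by simpa using h𝒜⟩
  refine ⟨Y, hY, fun v hv => Set.not_infinite.mp fun hinf => ?_⟩
  have hvY : (insert v Y).encard = ↑(Nat.findGreatest Q n + 1) := by
    rw [Set.encard_insert_of_notMem hv, hYj]
    rfl
  obtain ⟨X, hX, hvX⟩ := hinf.nonempty
  have hle : Nat.findGreatest Q n + 1 ≤ n := by
    exact_mod_cast hvY ▸ (Set.encard_le_encard hvX).trans (hn X hX)
  exact Nat.findGreatest_is_greatest (Nat.lt_succ_self _) hle ⟨insert v Y, hvY, hinf⟩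

lemma exists_seq_eventually_inter_subset (h𝒜 : 𝒜.Infinite) (hn : ∀ X ∈ 𝒜, X.encard ≤ n) :
    ∃ (Y : Set α) (X : ℕ → Set α), (∀ i, X i ∈ 𝒜 ∧ Y ⊂ X i) ∧
      ∀ W : Set α, W.Finite → ∀ᶠ i in Filter.cofinite, X i ∩ W ⊆ Y := by
  obtain ⟨Y, hY, hfin⟩ := h𝒜.exists_maximal_core hn
  have h𝒳 : {X ∈ 𝒜 | Y ⊂ X}.Infinite := by
    refine fun hf => hY ((hf.insert Y).subset fun X ⟨hX, hYX⟩ => ?_)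
    by_cases hXY : Y = X
    exacts [Or.inl hXY.symm, Or.inr ⟨hX, hYX.ssubset_of_ne hXY⟩]
  let e := h𝒳.natEmbedding
  have he : Function.Injective fun i => (e i : Set α) := Subtype.val_injective.comp e.injective
  refine ⟨Y, fun i => e i, fun i => (e i).2, fun W hW => Filter.eventually_cofinite.mpr ?_⟩
  refine ((hW.sdiff (t := Y)).biUnion fun v hv => (hfin v hv.2).preimage he.injOn).subset ?_
  intro i hi
  obtain ⟨v, ⟨hvX, hvW⟩, hvY⟩ := Set.not_subset.mp hi
  exact Set.mem_biUnion (x := v) ⟨hvW, hvY⟩ ⟨(e i).2.1, Set.insert_subset hvX (e i).2.2.subset⟩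

end Set.Infinite

lemma Filter.tendsto_cofinite_of_eventually_inter_subset {ι α : Type*} {X : ι → Set α}
    {Y : Set α} {z : ι → α} (hX : ∀ W : Set α, W.Finite → ∀ᶠ i in cofinite, X i ∩ W ⊆ Y)
    (hz : ∀ i, z i ∈ X i) (hzY : ∀ i, z i ∉ Y) : Tendsto z cofinite cofinite := by
  intro S hS
  rw [mem_map]
  filter_upwards [hX Sᶜ hS] with i hi
  by_contra hzS
  exact hzY i (hi ⟨hz i, hzS⟩)

namespace GraphSep

variable {V : Type} {G : SimpleGraph V}

@[simp] lemma inv_A (s : GraphSep G) : s.inv.A = s.B := rfl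
@[simp] lemma inv_B (s : GraphSep G) : s.inv.B = s.A := rfl
@[simp] lemma join_A (s t : GraphSep G) : (s.join t).A = s.A ∪ t.A := rfl
@[simp] lemma join_B (s t : GraphSep G) : (s.join t).B = s.B ∩ t.B := rfl

lemma order_inv (s : GraphSep G) : s.inv.order = s.order := by
  rw [order, order, inv_A, inv_B, Set.inter_comm]

lemma B_eq_univ_of_A_subset {s : GraphSep G} (h : s.A ⊆ s.B) : s.B = Set.univ := by
  rw [← s.union_eq, Set.union_eq_self_of_subset_left h]

lemma sep_join_of_sep_subset {s r : GraphSep G} (h : r.A ∩ r.B ⊆ s.A ∩ s.B) :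
    (s.join r).A ∩ (s.join r).B = s.A ∩ s.B ∩ r.B := by
  ext u
  simp only [join_A, join_B, Set.mem_inter_iff, Set.mem_union]
  constructor
  · rintro ⟨huA | huA, huB, huB'⟩
    · exact ⟨⟨huA, huB⟩, huB'⟩
    · exact ⟨h ⟨huA, huB'⟩, huB'⟩
  · rintro ⟨⟨huA, huB⟩, huB'⟩
    exact ⟨Or.inl huA, huB, huB'⟩

lemma distinguishes_comm {s : GraphSep G} {P P' : Set (GraphSep G)} :
    Distinguishes s P' P ↔ Distinguishes s P P' := by
  unfold Distinguishes
  tauto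

namespace AvoidReach

variable {X Y : Set V} {u v w : V}

lemma refl (hv : v ∉ Y) : AvoidReach G Y v v := ⟨.nil, by simpa using hv⟩

lemma symm (h : AvoidReach G Y v w) : AvoidReach G Y w v :=
  let ⟨p, hp⟩ := h
  ⟨p.reverse, fun u hu => hp u (by simpa using hu)⟩

lemma trans (h₁ : AvoidReach G Y u v) (h₂ : AvoidReach G Y v w) : AvoidReach G Y u w := by
  obtain ⟨p, hp⟩ := h₁
  obtain ⟨q, hq⟩ := h₂
  exact ⟨p.append q, fun x hx => ((p.mem_support_append_iff q).mp hx).elim (hp x) (hq x)⟩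

lemma mono (h : AvoidReach G Y v w) (hXY : X ⊆ Y) : AvoidReach G X v w :=
  let ⟨p, hp⟩ := h
  ⟨p, fun u hu hX => hp u hu (hXY hX)⟩

lemma notMem_right (h : AvoidReach G Y v w) : w ∉ Y :=
  let ⟨p, hp⟩ := h
  hp w p.end_mem_support

lemma adj (h : AvoidReach G Y v w) (hadj : G.Adj w u) (hu : u ∉ Y) : AvoidReach G Y v u :=
  h.trans ⟨hadj.toWalk, by simp [h.notMem_right, hu]⟩

end AvoidReach

lemma not_avoidReach_sep (s : GraphSep G) {a b : V} (ha : a ∈ s.A) (hb : b ∉ s.A) :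
    ¬ AvoidReach G (s.A ∩ s.B) a b := by
  rintro ⟨p, hp⟩
  obtain ⟨d, hd, hdA, hdA'⟩ := p.exists_boundary_dart s.A ha hb
  have hdB : d.snd ∈ s.B := (s.mem_A_or_B _).resolve_left hdA'
  have hdB' : d.fst ∉ s.B := fun h => hp _ (p.dart_fst_mem_support_of_mem_darts hd) ⟨hdA, h⟩
  exact s.no_edge _ ⟨hdA, hdB'⟩ _ ⟨hdB, hdA'⟩ d.adj

lemma exists_finite_avoidReach (Y : Set V) {F : Set V} (hF : F.Finite) :
    ∃ W : Set V, W.Finite ∧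
      ∀ a ∈ F, ∀ b ∈ F, AvoidReach G Y a b → AvoidReach G (Y ∪ Wᶜ) a b := by
  have hwalk : ∀ a b : V, ∃ W : Set V, W.Finite ∧
      (AvoidReach G Y a b → AvoidReach G (Y ∪ Wᶜ) a b) := by
    intro a b
    by_cases hab : AvoidReach G Y a b
    · obtain ⟨p, hp⟩ := hab
      exact ⟨{v | v ∈ p.support}, p.support.finite_toSet,
        fun _ => ⟨p, fun u hu h => h.elim (hp u hu) (· hu)⟩⟩
    · exact ⟨∅, Set.finite_empty, hab.elim⟩
  choose W hW hWab using hwalk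
  refine ⟨⋃ a ∈ F, ⋃ b ∈ F, W a b, hF.biUnion fun a _ => hF.biUnion fun b _ => hW a b,
    fun a ha b hb hab => (hWab a b hab).mono ?_⟩
  refine Set.union_subset_union_right _ (Set.compl_subset_compl.mpr ?_)
  exact (Set.subset_biUnion_of_mem hb).trans
    (Set.subset_biUnion_of_mem (u := fun a => ⋃ b ∈ F, W a b) ha)

def reachFrom (G : SimpleGraph V) (Y S : Set V) : Set V :=
  {v | ∃ a ∈ S, AvoidReach G Y a v}

def reachSep (G : SimpleGraph V) (Y S : Set V) : GraphSep G where
  A := (reachFrom G Y S)ᶜ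
  B := reachFrom G Y S ∪ Y
  union_eq := by rw [← Set.union_assoc, Set.compl_union_self, Set.univ_union]
  no_edge := by
    rintro a ⟨-, haB⟩ b ⟨-, hbA⟩ hadj
    obtain ⟨x, hx, hxb⟩ := not_not.mp hbA
    exact haB (Or.inl ⟨x, hx, hxb.adj hadj.symm fun h => haB (Or.inr h)⟩)

@[simp] lemma reachSep_A (Y S : Set V) : (reachSep G Y S).A = (reachFrom G Y S)ᶜ := rfl
@[simp] lemma reachSep_B (Y S : Set V) : (reachSep G Y S).B = reachFrom G Y S ∪ Y := rfl

lemma reachSep_sep (Y S : Set V) : (reachSep G Y S).A ∩ (reachSep G Y S).B = Y := by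
  ext v
  simp only [reachSep_A, reachSep_B, Set.mem_inter_iff, Set.mem_compl_iff, Set.mem_union]
  constructor
  · rintro ⟨hv, hv' | hv'⟩
    · exact (hv hv').elim
    · exact hv'
  · intro hv
    exact ⟨fun ⟨_, _, h⟩ => h.notMem_right hv, Or.inr hv⟩

def ultrafilterProfile (G : SimpleGraph V) (U : Ultrafilter V) : Set (GraphSep G) :=
  {t | t.order < ⊤ ∧ t.B ∈ U}

lemma isProfile_ultrafilterProfile {U : Ultrafilter V} (hU : (U : Filter V) ≤ Filter.cofinite) :
    IsProfile ⊤ (ultrafilterProfile G U) := by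
  have hfin : ∀ ⦃S T : Set V⦄, T.Finite → S ⊆ T → S ∉ U := fun S T hT hST hS =>
    Ultrafilter.compl_mem_iff_notMem.mp (hU hT.compl_mem_cofinite)
      (Filter.mem_of_superset (f := (U : Filter V)) hS hST)
  have hsep : ∀ t ∈ ultrafilterProfile G U, (t.A ∩ t.B).Finite :=
    fun t ht => Set.encard_lt_top_iff.mp ht.1
  refine ⟨⟨fun t ht => ht.1, fun t ht => ?_, fun t ht hti => ?_⟩,
    fun r hr t ht hrt => ?_, fun s hs t ht hst => ?_⟩
  · have : t.A ∪ t.B ∈ U := by rw [t.union_eq]; exact Filter.univ_mem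
    rcases Ultrafilter.union_mem_iff.mp this with h | h
    · exact Or.inr ⟨by rwa [order_inv], h⟩
    · exact Or.inl ⟨ht, h⟩
  · exact (hfin (hsep t ht) subset_rfl (Filter.inter_mem hti.2 ht.2)).elim
  · exact (hfin (hsep t ht) (fun x hx => ⟨hrt.1 hx.1, hx.2⟩) (Filter.inter_mem hr.2 ht.2)).elim
  · refine hfin ((hsep s hs).union (hsep t ht)) ?_
      (Filter.inter_mem hst.2 (Filter.inter_mem hs.2 ht.2))
    rintro x ⟨hxA | hxA, hxB, hxB'⟩
    exacts [Or.inl ⟨hxA, hxB⟩, Or.inr ⟨hxA, hxB'⟩]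

section Profile

variable {k : ℕ∞} {P : Set (GraphSep G)} {s t : GraphSep G}

lemma BoundedP.exists_eventually_notMem_B (hP : BoundedP P) {ι : Type*} [Infinite ι] {z : ι → V}
    (hz : Filter.Tendsto z Filter.cofinite Filter.cofinite) :
    ∃ c ∈ P, ∀ᶠ i in Filter.hyperfilter ι, z i ∉ c.B := by
  obtain ⟨⟨k, hk⟩, hnot⟩ := hP
  have hU : ((Filter.hyperfilter ι).map z : Filter V) ≤ Filter.cofinite := by
    rw [Ultrafilter.coe_map]
    exact hz.mono_left Filter.hyperfilter_le_cofinite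
  obtain ⟨c, hc, hcU⟩ := Set.not_subset.mp (hnot _ (isProfile_ultrafilterProfile hU))
  refine ⟨c, hc, Ultrafilter.mem_map.mp (Ultrafilter.compl_mem_iff_notMem.mpr fun hB => ?_)⟩
  exact hcU ⟨(hk.1.1 c hc).trans (ENat.natCast_lt_top k), hB⟩

lemma BoundedP.finite_sep (hP : BoundedP P) (hs : s ∈ P) : (s.A ∩ s.B).Finite :=
  let ⟨⟨k, hk⟩, _⟩ := hP
  Set.encard_lt_top_iff.mp ((hk.1.1 s hs).trans (ENat.natCast_lt_top k))

lemma IsProfile.mem_or_inv_mem (hP : IsProfile k P) (hs : s.order < k) : s ∈ P ∨ s.inv ∈ P :=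
  hP.1.2.1 s hs

lemma IsProfile.join_mem (hP : IsProfile k P) (hs : s ∈ P) (ht : t ∈ P)
    (hk : (s.join t).order < k) : s.join t ∈ P :=
  (hP.mem_or_inv_mem hk).resolve_right (hP.2.2 s hs t ht)

lemma IsProfile.notMem_of_le (hP : IsProfile k P) (hreg : RegularP P) (hs : s.inv ∈ P)
    (hst : s.le t) : t ∉ P := by
  intro ht
  have hne : s.inv ≠ t := fun h =>
    hreg _ hs (B_eq_univ_of_A_subset (hst.1.trans (congrArg GraphSep.A h).ge))
  rcases hP.2.1 s.inv hs t ht hst with h | h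
  · exact hne h
  · have hst' : s = t := congrArg inv h
    subst hst'
    exact hne (hP.1.2.2 s ht hs)

lemma EffDist.exists_oriented {P' : Set (GraphSep G)} (hs : EffDist s P P') :
    ∃ t, t ∈ P ∧ t.inv ∈ P' ∧ t.A ∩ t.B = s.A ∩ s.B ∧ t.order = s.order := by
  rcases hs.1 with ⟨h, h'⟩ | ⟨h, h'⟩
  · exact ⟨s, h, h', rfl, rfl⟩
  · exact ⟨s.inv, h, h', Set.inter_comm _ _, order_inv s⟩

lemma EffDist.order_eq {P' : Set (GraphSep G)} (hs : EffDist s P P') (ht : EffDist t P P') :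
    s.order = t.order :=
  le_antisymm (hs.2 t ht.1) (ht.2 s hs.1)

end Profile

structure RegularPair (P P' : Set (GraphSep G)) (m : ℕ∞) : Prop where
  profile : ∃ k, m < k ∧ IsProfile k P
  profile' : ∃ k, m < k ∧ IsProfile k P'
  regular : RegularP P
  regular' : RegularP P'
  le_order : ∀ s, Distinguishes s P P' → m ≤ s.order

namespace RegularPair

variable {P P' : Set (GraphSep G)} {m : ℕ∞} {s r c c' : GraphSep G} {Y : Set V} {z : V}

lemma of_effDist (hP : BoundedP P) (hP' : BoundedP P') (hreg : RegularP P)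
    (hreg' : RegularP P') (hs : EffDist s P P') : RegularPair P P' s.order := by
  obtain ⟨⟨k, hk⟩, -⟩ := hP
  obtain ⟨⟨k', hk'⟩, -⟩ := hP'
  obtain ⟨t, ht, ht', -, hto⟩ := hs.exists_oriented
  refine ⟨⟨k, hto ▸ hk.1.1 t ht, hk⟩, ⟨k', ?_, hk'⟩, hreg, hreg', hs.2⟩
  rw [← hto, ← order_inv]
  exact hk'.1.1 _ ht'

lemma symm (h : RegularPair P P' m) : RegularPair P' P m :=
  ⟨h.profile', h.profile, h.regular', h.regular,
    fun s hs => h.le_order s (distinguishes_comm.mp hs)⟩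

lemma finite_sep (h : RegularPair P P' m) (hsm : s.order = m) : (s.A ∩ s.B).Finite :=
  let ⟨_, hk, _⟩ := h.profile
  Set.encard_lt_top_iff.mp (hsm ▸ hk.trans_le le_top : s.order < ⊤)

lemma mem_of_order_lt (h : RegularPair P P' m) (hs : s ∈ P) (hlt : s.order < m) : s ∈ P' := by
  obtain ⟨k, hk, hP'⟩ := h.profile'
  refine (hP'.mem_or_inv_mem (hlt.trans hk)).resolve_right fun hs' => ?_
  exact (h.le_order s (Or.inl ⟨hs, hs'⟩)).not_gt hlt

lemma join_mem (h : RegularPair P P' m) (hs : s ∈ P) (hs' : s.inv ∈ P') (hr : r ∈ P)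
    (hle : (s.join r).order ≤ m) : s.join r ∈ P ∧ (s.join r).inv ∈ P' := by
  obtain ⟨k, hk, hP⟩ := h.profile
  obtain ⟨k', hk', hP'⟩ := h.profile'
  refine ⟨hP.join_mem hs hr (hle.trans_lt hk),
    (hP'.mem_or_inv_mem (hle.trans_lt hk')).resolve_left ?_⟩
  exact hP'.notMem_of_le h.regular' hs' ⟨Set.subset_union_left, Set.inter_subset_left⟩

lemma le_order_join (h : RegularPair P P' m) (hs : s ∈ P) (hs' : s.inv ∈ P') (hr : r ∈ P) :
    m ≤ (s.join r).order := by
  by_contra! hlt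
  obtain ⟨hj, hj'⟩ := h.join_mem hs hs' hr hlt.le
  exact (h.le_order _ (Or.inl ⟨hj, hj'⟩)).not_gt hlt

lemma sep_join_not_subset (h : RegularPair P P' m) (hs : s ∈ P) (hs' : s.inv ∈ P')
    (hsm : s.order = m) (hr : r ∈ P) {T : Set V} (hT : T ⊂ s.A ∩ s.B) :
    ¬ (s.join r).A ∩ (s.join r).B ⊆ T := by
  intro hsub
  have hfin : T.Finite := (h.finite_sep hsm).subset hT.subset
  have hlt : (s.join r).order < m := calc
    (s.join r).order ≤ T.encard := Set.encard_le_encard hsub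
    _ < (s.A ∩ s.B).encard := hfin.encard_lt_encard hT
    _ = m := hsm
  exact (h.le_order_join hs hs' hr).not_gt hlt

lemma exists_mem_sep_diff (h : RegularPair P P' m) (hs : s ∈ P) (hs' : s.inv ∈ P')
    (hsm : s.order = m) (hc : c ∈ P) (hz : z ∈ s.A ∩ s.B) (hzc : z ∉ c.B) :
    ∃ u ∈ c.A ∩ c.B, u ∈ s.B \ s.A := by
  by_contra! hnone
  refine h.sep_join_not_subset hs hs' hsm hc (Set.sdiff_singleton_ssubset.mpr hz) ?_
  rintro u ⟨hu, huB, huB'⟩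
  refine ⟨⟨?_, huB⟩, fun huz => hzc (Set.mem_singleton_iff.mp huz ▸ huB')⟩
  rcases hu with huA | huA
  · exact huA
  · exact not_not.mp fun hA => hnone u ⟨huA, huB'⟩ ⟨huB, hA⟩

lemma sep_subset_B (h : RegularPair P P' m) (hs : s ∈ P) (hs' : s.inv ∈ P')
    (hsm : s.order = m) (hr : r ∈ P) (hrs : r.A ∩ r.B ⊆ s.A ∩ s.B) : s.A ∩ s.B ⊆ r.B := by
  by_contra hnot
  refine h.sep_join_not_subset hs hs' hsm hr
    (Set.inter_subset_left.ssubset_of_not_subset fun h => hnot fun x hx => (h hx).2) ?_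
  rw [sep_join_of_sep_subset hrs]

lemma exists_mem_sep_diff_of_sep_subset (h : RegularPair P P' m) (hs : s ∈ P)
    (hs' : s.inv ∈ P') (hsm : s.order = m) (hr : r ∈ P) (hrs : r.A ∩ r.B ⊆ s.A ∩ s.B)
    (hc : c ∈ P) (hz : z ∈ s.A ∩ s.B) (hzc : z ∉ c.B) :
    ∃ u ∈ c.A ∩ c.B, u ∈ s.B \ s.A ∧ u ∈ r.B \ r.A := by
  have hsep : (s.join r).A ∩ (s.join r).B = s.A ∩ s.B := by
    rw [sep_join_of_sep_subset hrs, Set.inter_eq_left.mpr (h.sep_subset_B hs hs' hsm hr hrs)]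
  have hjm : (s.join r).order = m := by rw [order, hsep]; exact hsm
  obtain ⟨hj, hj'⟩ := h.join_mem hs hs' hr hjm.le
  obtain ⟨u, hu, huB, huA⟩ := h.exists_mem_sep_diff hj hj' hjm hc (hsep ▸ hz) hzc
  exact ⟨u, hu, ⟨huB.1, fun h => huA (Or.inl h)⟩, huB.2, fun h => huA (Or.inr h)⟩

lemma sep_subset_reachFrom (h : RegularPair P P' m) (hs : s ∈ P) (hs' : s.inv ∈ P')
    (hsm : s.order = m) (hY : Y ⊂ s.A ∩ s.B) (hc : c ∈ P) (hz : z ∈ s.A ∩ s.B) (hzc : z ∉ c.B) :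
    s.A ∩ s.B ⊆ reachFrom G Y (c.A ∩ c.B ∩ (s.B \ s.A)) ∪ Y := by
  set y := reachSep G Y (c.A ∩ c.B ∩ (s.B \ s.A))
  have hylt : y.order < m := by
    rw [order, reachSep_sep, ← hsm]
    exact ((h.finite_sep hsm).subset hY.subset).encard_lt_encard hY
  have hyP : y ∈ P := by
    obtain ⟨k, hk, hP⟩ := h.profile
    refine (hP.mem_or_inv_mem (hylt.trans hk)).resolve_right fun hyi => ?_
    obtain ⟨u, hu, hus, -, huy⟩ := h.exists_mem_sep_diff_of_sep_subset hs hs' hsm hyi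
      (by rw [inv_A, inv_B, Set.inter_comm, reachSep_sep]; exact hY.subset) hc hz hzc
    exact huy (Or.inl ⟨u, ⟨hu, hus⟩, .refl fun hY => huy (Or.inr hY)⟩)
  have := h.symm.sep_subset_B (s := s.inv) hs' hs (by rw [order_inv, hsm])
    (h.mem_of_order_lt hyP hylt)
    (by rw [reachSep_sep, inv_A, inv_B, Set.inter_comm]; exact hY.subset)
  exact fun x hx => this ⟨hx.2, hx.1⟩

lemma exists_avoidReach_not_avoidReach (h : RegularPair P P' m) (hs : s ∈ P) (hs' : s.inv ∈ P')
    (hsm : s.order = m) (hY : Y ⊂ s.A ∩ s.B) (hc : c ∈ P) (hc' : c' ∈ P')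
    (hz : z ∈ s.A ∩ s.B) (hzc : z ∉ c.B) (hzc' : z ∉ c'.B) :
    ∃ a ∈ c'.A ∩ c'.B, ∃ b ∈ c.A ∩ c.B,
      AvoidReach G Y a b ∧ ¬ AvoidReach G (s.A ∩ s.B) a b := by
  have hsinv : s.inv.A ∩ s.inv.B = s.A ∩ s.B := Set.inter_comm _ _
  have hB := h.sep_subset_reachFrom hs hs' hsm hY hc hz hzc
  have hA := h.symm.sep_subset_reachFrom (s := s.inv) hs' hs (by rw [order_inv, hsm])
    (hsinv ▸ hY) hc' (hsinv ▸ hz) hzc'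
  obtain ⟨x, hx, hxY⟩ := Set.exists_of_ssubset hY
  obtain ⟨b, ⟨hb, hbs⟩, hbx⟩ := (hB hx).resolve_right hxY
  obtain ⟨a, ⟨ha, has⟩, hax⟩ := (hA (hsinv ▸ hx)).resolve_right hxY
  exact ⟨a, ha, b, hb, hax.trans hbx.symm, s.not_avoidReach_sep has.1 hbs.2⟩

end RegularPair

end GraphSep

open GraphSep in
theorem stmt9_general {V : Type} (G : SimpleGraph V)
    (P P' : Set (GraphSep G))
    (hreg : RegularP P) (hreg' : RegularP P')
    (hbdd : BoundedP P) (hbdd' : BoundedP P') :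
    {X : Set V | ∃ s : GraphSep G, EffDist s P P' ∧ s.A ∩ s.B = X}.Finite := by
  by_contra hinf
  obtain ⟨-, s₀, hs₀, -⟩ := Set.Infinite.nonempty hinf
  have h := RegularPair.of_effDist hbdd hbdd' hreg hreg' hs₀
  have horient : ∀ X ∈ {X : Set V | ∃ s : GraphSep G, EffDist s P P' ∧ s.A ∩ s.B = X},
      ∃ t, t ∈ P ∧ t.inv ∈ P' ∧ t.order = s₀.order ∧ t.A ∩ t.B = X := by
    rintro X ⟨s, hs, rfl⟩
    obtain ⟨t, ht, ht', htX, hto⟩ := hs.exists_oriented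
    exact ⟨t, ht, ht', hto.trans (hs.order_eq hs₀), htX⟩
  obtain ⟨k, hk⟩ := hbdd.1
  obtain ⟨Y, X, hX, hloc⟩ := Set.Infinite.exists_seq_eventually_inter_subset hinf (n := k)
    fun X hX => let ⟨t, ht, _, _, htX⟩ := horient X hX; htX ▸ (hk.1.1 t ht).le
  choose s hsP hsP' hsm hsX using fun i => horient _ (hX i).1
  choose z hzX hzY using fun i => Set.exists_of_ssubset (hX i).2
  have hz := Filter.tendsto_cofinite_of_eventually_inter_subset hloc hzX hzY
  obtain ⟨c, hc, hcz⟩ := hbdd.exists_eventually_notMem_B hz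
  obtain ⟨c', hc', hc'z⟩ := hbdd'.exists_eventually_notMem_B hz
  obtain ⟨W, hW, hWreach⟩ :=
    exists_finite_avoidReach (G := G) Y ((hbdd'.finite_sep hc').union (hbdd.finite_sep hc))
  obtain ⟨i, hiW, hic, hic'⟩ :=
    (Filter.Eventually.and (Filter.hyperfilter_le_cofinite (hloc W hW)) (hcz.and hc'z)).exists
  obtain ⟨a, ha, b, hb, hab, hnab⟩ := h.exists_avoidReach_not_avoidReach (hsP i) (hsP' i)
    (hsm i) (hsX i ▸ (hX i).2) hc hc' (hsX i ▸ hzX i) hic hic'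
  refine hnab ((hWreach a (.inl ha) b (.inr hb) hab).mono fun v hv => ?_)
  by_cases hvW : v ∈ W
  exacts [Or.inl (hiW ⟨hsX i ▸ hv, hvW⟩), Or.inr hvW]

open GraphSep in
/-- distinguishable regular bounded profiles have only finitely many
distinct separators of efficient distinguishers. -/
theorem stmt9 {V : Type} (G : SimpleGraph V) (hG : G.Connected)
    (P P' : Set (GraphSep G))
    (hP : IsProfileIn G P) (hP' : IsProfileIn G P')
    (hreg : RegularP P) (hreg' : RegularP P')
    (hbdd : BoundedP P) (hbdd' : BoundedP P')
    (hdist : Distinguishable P P') :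
    {X : Set V | ∃ s : GraphSep G, EffDist s P P' ∧ s.A ∩ s.B = X}.Finite :=
  stmt9_general G P P' hreg hreg' hbdd hbdd'
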